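/- arXiv:math/0608271 — 2 statements merged into one kernel-verified Lean document; each statement's English description precedes it below -/
import Mathlib

section
/- Let θ > 1 be a Pisot number and λ = 1/θ. Then there exists a constant c₁ ∈ (0,1) such that for all n ≥ 1 and all sequences a₁,…,a_n and b₁,…,b_n in {0,1} with Σ_{i=1}^n a_i λ^i ≠ Σ_{i=1}^n b_i λ^i, one has |Σ_{i=1}^n a_i λ^i - Σ_{i=1}^n b_i λ^i| ≥ c₁ λ^n. -/
/-
Put `x = ∑ cᵢ θⁱ` with `cᵢ ∈ {-1, 0, 1}`; the difference of the two sums is `λⁿ x`. If `x ≠ 0`,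
it is a nonzero algebraic integer of `ℚ(θ)`, so the product of `|σ x|` over all complex embeddings
`σ` is `|N(x)| ≥ 1`. An embedding sending `θ` to `θ` sends `x` to `x`; every other one sends `θ`
to a conjugate `θ'` with `|θ'| < 1`, and then `|σ x| ≤ ∑ |θ'|ⁱ ≤ 1 / (1 - |θ'|)`. Hence `|x|` is
bounded below by a constant depending only on `θ`.
-/

open Polynomial Finset IntermediateField

theorem norm_sum_mul_pow_le_inv_one_sub {R : Type*} [SeminormedRing R] [NormOneClass R]
    {c : ℕ → R} (hc : ∀ i, ‖c i‖ ≤ 1) {z : R} (hz : ‖z‖ < 1) (n : ℕ) :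
    ‖∑ i ∈ range n, c i * z ^ i‖ ≤ (1 - ‖z‖)⁻¹ :=
  calc ‖∑ i ∈ range n, c i * z ^ i‖ ≤ ∑ i ∈ range n, ‖z‖ ^ i := by
        refine (norm_sum_le _ _).trans (sum_le_sum fun i _ => ?_)
        calc ‖c i * z ^ i‖ ≤ ‖c i‖ * ‖z‖ ^ i := (norm_mul_le _ _).trans
                (mul_le_mul_of_nonneg_left (norm_pow_le _ _) (norm_nonneg _))
          _ ≤ ‖z‖ ^ i := mul_le_of_le_one_left (by positivity) (hc i)
    _ ≤ (1 - ‖z‖)⁻¹ := by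
        have h := geom_sum_Ico_le_of_lt_one (m := 0) (n := n) (norm_nonneg z) hz
        rwa [← range_eq_Ico, pow_zero, one_div] at h

theorem le_of_le_pow_of_le_one {C r : ℝ} {k : ℕ} (hr : 0 ≤ r) (hC : C ≤ 1) (hk : k ≠ 0)
    (h : C ≤ r ^ k) : C ≤ r := by
  rcases le_total r 1 with hr1 | hr1
  · exact h.trans (pow_le_of_le_one hr hr1 hk)
  · exact hC.trans hr1

theorem one_le_prod_norm_embeddings {K : Type*} [Field K] [NumberField K] {x : K}
    (hx : IsIntegral ℤ x) (hx0 : x ≠ 0) : 1 ≤ ∏ σ : K →ₐ[ℚ] ℂ, ‖σ x‖ := by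
  obtain ⟨m, hm⟩ := IsIntegrallyClosed.isIntegral_iff.mp (Algebra.isIntegral_norm ℚ hx)
  have hm0 : m ≠ 0 := by
    rintro rfl
    exact (Algebra.norm_ne_zero_iff.mpr hx0) (by rw [← hm, map_zero])
  rw [← norm_prod, ← Algebra.norm_eq_prod_embeddings, ← hm, eq_intCast, map_intCast,
    Complex.norm_intCast]
  exact_mod_cast Int.one_le_abs hm0

theorem exists_le_norm_sum_mul_pow_of_norm_conj_lt_one {K : Type*} [Field K] [NumberField K]
    {t : K} (ht : IsIntegral ℤ t) (φ : K →ₐ[ℚ] ℂ)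
    (hconj : ∀ σ : K →ₐ[ℚ] ℂ, σ t ≠ φ t → ‖σ t‖ < 1) :
    ∃ C : ℝ, 0 < C ∧ C ≤ 1 ∧ ∀ (n : ℕ) (c : ℕ → ℤ), (∀ i, |c i| ≤ 1) →
      ∑ i ∈ range n, (c i : K) * t ^ i ≠ 0 →
        C ≤ ‖φ (∑ i ∈ range n, (c i : K) * t ^ i)‖ := by
  classical
  set T := univ.filter fun σ : K →ₐ[ℚ] ℂ => σ t ≠ φ t
  set F := univ.filter fun σ : K →ₐ[ℚ] ℂ => σ t = φ t
  have hT : ∀ σ ∈ T, ‖σ t‖ < 1 := fun σ hσ => hconj σ (mem_filter.mp hσ).2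
  set C := ∏ σ ∈ T, (1 - ‖σ t‖)
  have hC0 : 0 < C := prod_pos fun σ hσ => sub_pos.mpr (hT σ hσ)
  have hC1 : C ≤ 1 := prod_le_one (fun σ hσ => sub_nonneg.mpr (hT σ hσ).le)
    fun σ _ => sub_le_self _ (norm_nonneg _)
  refine ⟨C, hC0, hC1, fun n c hc hx0 => ?_⟩
  set x := ∑ i ∈ range n, (c i : K) * t ^ i
  have hσx : ∀ σ : K →ₐ[ℚ] ℂ, σ x = ∑ i ∈ range n, (c i : ℂ) * σ t ^ i := fun σ => by
    simp only [x, map_sum, map_mul, map_pow, map_intCast]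
  have hxint : IsIntegral ℤ x :=
    IsIntegral.sum _ fun i _ => isIntegral_algebraMap.mul (ht.pow i)
  have hF : ∀ σ ∈ F, ‖σ x‖ = ‖φ x‖ := fun σ hσ => by rw [hσx, hσx, (mem_filter.mp hσ).2]
  have hT_le : ∀ σ ∈ T, ‖σ x‖ ≤ (1 - ‖σ t‖)⁻¹ := fun σ hσ => by
    rw [hσx]
    refine norm_sum_mul_pow_le_inv_one_sub (fun i => ?_) (hT σ hσ) n
    rw [Complex.norm_intCast]
    exact_mod_cast hc i
  have hkey : 1 ≤ ‖φ x‖ ^ #F * C⁻¹ :=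
    calc 1 ≤ ∏ σ : K →ₐ[ℚ] ℂ, ‖σ x‖ := one_le_prod_norm_embeddings hxint hx0
      _ = (∏ σ ∈ F, ‖σ x‖) * ∏ σ ∈ T, ‖σ x‖ := (prod_filter_mul_prod_filter_not _ _ _).symm
      _ ≤ ‖φ x‖ ^ #F * C⁻¹ := by
        rw [prod_congr rfl hF, prod_const, ← prod_inv_distrib]
        gcongr with σ hσ
        exact hT_le σ hσ
  have hφF : φ ∈ F := mem_filter.mpr ⟨mem_univ φ, rfl⟩
  rw [← div_eq_mul_inv, one_le_div hC0] at hkey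
  exact le_of_le_pow_of_le_one (norm_nonneg _) hC1 (card_ne_zero_of_mem hφF) hkey

theorem exists_le_abs_sum_mul_pow_of_conj_lt_one {θ : ℝ} (hint : IsIntegral ℤ θ)
    (hconj : ∀ z : ℂ, z ≠ θ → aeval z (minpoly ℤ θ) = 0 → ‖z‖ < 1) :
    ∃ C : ℝ, 0 < C ∧ C ≤ 1 ∧ ∀ (n : ℕ) (c : ℕ → ℤ), (∀ i, |c i| ≤ 1) →
      ∑ i ∈ range n, (c i : ℝ) * θ ^ i ≠ 0 → C ≤ |∑ i ∈ range n, (c i : ℝ) * θ ^ i| := by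
  have : FiniteDimensional ℚ ℚ⟮θ⟯ := adjoin.finiteDimensional hint.tower_top
  have : NumberField ℚ⟮θ⟯ := {}
  set t := AdjoinSimple.gen ℚ θ
  have hval : algebraMap ℚ⟮θ⟯ ℝ t = θ := AdjoinSimple.algebraMap_gen ℚ θ
  have hinj : Function.Injective (algebraMap ℚ⟮θ⟯ ℝ) := (algebraMap ℚ⟮θ⟯ ℝ).injective
  have ht : IsIntegral ℤ t := (isIntegral_algebraMap_iff hinj).mp (by rwa [hval])
  have hmin : minpoly ℤ t = minpoly ℤ θ := by rw [← minpoly.algebraMap_eq hinj, hval]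
  let φ : ℚ⟮θ⟯ →ₐ[ℚ] ℂ :=
    (Complex.ofRealAm.restrictScalars ℚ).comp (IsScalarTower.toAlgHom ℚ ℚ⟮θ⟯ ℝ)
  have hφ : ∀ x, φ x = (algebraMap ℚ⟮θ⟯ ℝ x : ℂ) := fun _ => rfl
  have hroot : ∀ σ : ℚ⟮θ⟯ →ₐ[ℚ] ℂ, aeval (σ t) (minpoly ℤ θ) = 0 := fun σ => by
    rw [← hmin, show σ t = σ.restrictScalars ℤ t from rfl, aeval_algHom_apply, minpoly.aeval,
      map_zero]
  obtain ⟨C, hC0, hC1, hC⟩ := exists_le_norm_sum_mul_pow_of_norm_conj_lt_one ht φ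
    fun σ hσ => hconj _ (by rwa [hφ, hval] at hσ) (hroot σ)
  refine ⟨C, hC0, hC1, fun n c hc hx0 => ?_⟩
  have hx : algebraMap ℚ⟮θ⟯ ℝ (∑ i ∈ range n, (c i : ℚ⟮θ⟯) * t ^ i) =
      ∑ i ∈ range n, (c i : ℝ) * θ ^ i := by
    simp only [map_sum, map_mul, map_pow, map_intCast, hval]
  have := hC n c hc fun h => hx0 (by rw [← hx, h, map_zero])
  rwa [hφ, hx, Complex.norm_real, Real.norm_eq_abs] at this

theorem sum_Icc_mul_pow_eq_pow_mul_sum_range {R : Type*} [CommRing R] {lam θ : R}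
    (h : lam * θ = 1) (e : ℕ → R) (n : ℕ) :
    ∑ i ∈ Icc 1 n, e i * lam ^ i = lam ^ n * ∑ j ∈ range n, e (n - j) * θ ^ j := by
  rw [← Ico_add_one_right_eq_Icc, sum_Ico_eq_sum_range, add_tsub_cancel_right, mul_sum,
    ← sum_range_reflect]
  refine sum_congr rfl fun j hj => ?_
  have hjn : j < n := mem_range.mp hj
  calc e (1 + (n - 1 - j)) * lam ^ (1 + (n - 1 - j))
      = e (n - j) * lam ^ (n - j) * (lam * θ) ^ j := by
        rw [h, one_pow, mul_one, show 1 + (n - 1 - j) = n - j by omega]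
    _ = lam ^ n * (e (n - j) * θ ^ j) := by rw [← pow_mul_pow_sub lam hjn.le]; ring

theorem stmt12 (θ lam : ℝ) (hθ1 : 1 < θ) (hint : IsIntegral ℤ θ)
    (hconj : ∀ z : ℂ, z ≠ (θ : ℂ) → Polynomial.aeval z (minpoly ℤ θ) = 0 → ‖z‖ < 1)
    (hlam : lam = 1 / θ) :
    ∃ c₁ : ℝ, c₁ ∈ Set.Ioo (0 : ℝ) 1 ∧ ∀ n : ℕ, 1 ≤ n → ∀ a b : ℕ → ℝ,
      (∀ i, a i = 0 ∨ a i = 1) → (∀ i, b i = 0 ∨ b i = 1) →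
      (∑ i ∈ Finset.Icc 1 n, a i * lam ^ i) ≠ (∑ i ∈ Finset.Icc 1 n, b i * lam ^ i) →
      c₁ * lam ^ n ≤
        |∑ i ∈ Finset.Icc 1 n, a i * lam ^ i - ∑ i ∈ Finset.Icc 1 n, b i * lam ^ i| := by
  obtain ⟨C, hC0, hC1, hC⟩ := exists_le_abs_sum_mul_pow_of_conj_lt_one hint hconj
  have hθ0 : 0 < θ := zero_lt_one.trans hθ1
  have hlam0 : 0 < lam := by rw [hlam]; positivity
  have hlamθ : lam * θ = 1 := by rw [hlam, one_div, inv_mul_cancel₀ hθ0.ne']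
  refine ⟨C / 2, ⟨by positivity, by linarith⟩, fun n _ a b ha hb hne => ?_⟩
  have hdigit : ∀ i, ∃ m : ℤ, |m| ≤ 1 ∧ (m : ℝ) = a i - b i := fun i => by
    rcases ha i with h | h <;> rcases hb i with h' | h' <;> rw [h, h']
    exacts [⟨0, by norm_num, by norm_num⟩, ⟨-1, by norm_num, by norm_num⟩,
      ⟨1, by norm_num, by norm_num⟩, ⟨0, by norm_num, by norm_num⟩]
  choose d hd1 hd using hdigit
  set x := ∑ j ∈ range n, (d (n - j) : ℝ) * θ ^ j
  have hdiff : ∑ i ∈ Icc 1 n, a i * lam ^ i - ∑ i ∈ Icc 1 n, b i * lam ^ i = lam ^ n * x := by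
    simp only [← sum_sub_distrib, ← sub_mul, ← hd]
    exact sum_Icc_mul_pow_eq_pow_mul_sum_range hlamθ _ n
  have hx0 : x ≠ 0 := by
    intro hx
    exact hne (sub_eq_zero.mp (by rw [hdiff, hx, mul_zero]))
  rw [hdiff, abs_mul, abs_of_pos (pow_pos hlam0 n), mul_comm]
  have hx := hC n (fun j => d (n - j)) (fun j => hd1 _) hx0
  gcongr
  linarith
end

section
/- Let λ ∈ ((√5-1)/2, 1), let ℓ ≥ 3 satisfy 1 < λ² + ⋯ + λ^ℓ, and let U = (λ^ℓ/(1-λ^ℓ), λ/(1-λ) - λ^ℓ/(1-λ^ℓ)). For a finite 0-1 word a of length n, write ξ(a) = Σ_{j=1}^n a_j λ^j and U_a = ξ(a) + λ^n U. Then U ⊆ (⋃_{a ∈ {0,1}^{ℓ-1}} U_{a0}) ∩ (⋃_{a ∈ {0,1}^{ℓ-1}} U_{a1}), i.e., every point of U lies in some interval U_{a0} with a ∈ {0,1}^{ℓ-1} and also in some interval U_{a'1} with a' ∈ {0,1}^{ℓ-1}. -/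
/-! Two translates `λ I` and `λ + λ I` of an open interval `I` overlap exactly when `|I| > 1`,
and their union is then an interval of length `λ |I| + λ`, again `> 1` when `λ > 1/2`.
Splitting off the first letter, the translates `ξ(a) + λ^m (P, Q)` over all words of length `m`
therefore cover `(λ^m P, λ^m Q + λ + ⋯ + λ^m)` whenever `Q - P > 1`.
The endpoints `A < B` of `U` are the `λ`-expansions of `(0^{ℓ-1}1)^∞` and `(1^{ℓ-1}0)^∞`, so for
last letter `0` resp. `1` this cover runs from `λ^ℓ A < A` to `B`, resp. from `A` to `B + λ^ℓ`;
and `λ² + ⋯ + λ^ℓ > 1` is what makes `λ U` longer than `1`. -/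

open Finset Set

-- `ξ(a)`; letters are indexed from `0`, so `a j` carries the weight `λ^(j+1)`.
noncomputable def wordValue (lam : ℝ) {m : ℕ} (a : Fin m → Fin 2) : ℝ :=
  ∑ j : Fin m, (a j : ℝ) * lam ^ ((j : ℕ) + 1)

-- `U = Ioo (leftEnd λ ℓ) (rightEnd λ ℓ)`.
noncomputable def leftEnd (lam : ℝ) (l : ℕ) : ℝ := lam ^ l / (1 - lam ^ l)

noncomputable def rightEnd (lam : ℝ) (l : ℕ) : ℝ := lam / (1 - lam) - leftEnd lam l

section

variable {lam : ℝ}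

theorem wordValue_cons {m : ℕ} (c : Fin 2) (a : Fin m → Fin 2) :
    wordValue lam (Fin.cons c a : Fin (m + 1) → Fin 2) = c * lam + lam * wordValue lam a := by
  simp only [wordValue, Fin.sum_univ_succ, Fin.cons_zero, Fin.cons_succ, Fin.val_zero,
    Fin.val_succ, mul_sum, zero_add, pow_one]
  congr 1
  exact sum_congr rfl fun j _ => by ring

theorem one_lt_pow_mul_add_geom_sum (hlam : 1 / 2 < lam) {d : ℝ} (hd : 1 < d) (m : ℕ) :
    1 < lam ^ m * d + lam * ∑ i ∈ range m, lam ^ i := by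
  induction m with
  | zero => simpa using hd
  | succ n ih =>
    have hstep : lam ^ (n + 1) * d + lam * ∑ i ∈ range (n + 1), lam ^ i
        = lam * (lam ^ n * d + lam * ∑ i ∈ range n, lam ^ i) + lam := by
      rw [geom_sum_succ, pow_succ]; ring
    rw [hstep]
    nlinarith

theorem exists_digit_of_mem_Ioo (hlam : 0 < lam) {P Q s : ℝ} (hPQ : 1 < Q - P)
    (hs : s ∈ Ioo (lam * P) (lam * Q + lam)) :
    ∃ c : Fin 2, ∃ t ∈ Ioo P Q, s = c * lam + lam * t := by
  obtain ⟨hs1, hs2⟩ := hs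
  by_cases h : s < lam * Q
  · refine ⟨0, s / lam, ⟨?_, ?_⟩, by field_simp; simp⟩
    · rwa [lt_div_iff₀ hlam, mul_comm]
    · rwa [div_lt_iff₀ hlam, mul_comm]
  · refine ⟨1, s / lam - 1, ⟨?_, ?_⟩, by field_simp; simp⟩
    · rw [lt_sub_iff_add_lt, lt_div_iff₀ hlam]; nlinarith
    · rw [sub_lt_iff_lt_add, div_lt_iff₀ hlam]; linarith

theorem exists_word_of_mem_Ioo (hlam : 1 / 2 < lam) {P Q : ℝ} (hPQ : 1 < Q - P) (m : ℕ) {s : ℝ}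
    (hs : s ∈ Ioo (lam ^ m * P) (lam ^ m * Q + lam * ∑ i ∈ range m, lam ^ i)) :
    ∃ a : Fin m → Fin 2, ∃ y ∈ Ioo P Q, s = wordValue lam a + lam ^ m * y := by
  induction m generalizing s with
  | zero => exact ⟨Fin.elim0, s, by simpa using hs, by simp [wordValue]⟩
  | succ n ih =>
    have hlen : 1 < (lam ^ n * Q + lam * ∑ i ∈ range n, lam ^ i) - lam ^ n * P := by
      have := one_lt_pow_mul_add_geom_sum hlam hPQ n
      linarith [mul_sub (lam ^ n) Q P]
    have hs' : s ∈ Ioo (lam * (lam ^ n * P))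
        (lam * (lam ^ n * Q + lam * ∑ i ∈ range n, lam ^ i) + lam) := by
      convert hs using 2
      · rw [pow_succ]; ring
      · rw [geom_sum_succ, pow_succ]; ring
    obtain ⟨c, t, ht, rfl⟩ := exists_digit_of_mem_Ioo (by linarith) hlen hs'
    obtain ⟨a, y, hy, rfl⟩ := ih ht
    exact ⟨Fin.cons c a, y, hy, by rw [wordValue_cons, pow_succ]; ring⟩

theorem exists_word_mem_image_Ioo (hlam : 1 / 2 < lam) {A B : ℝ} (hAB : 1 < lam * (B - A))
    (m : ℕ) (c : ℝ) {x : ℝ}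
    (hx : x ∈ Ioo (lam ^ (m + 1) * (A + c))
      (lam ^ (m + 1) * (B + c) + lam * ∑ i ∈ range m, lam ^ i)) :
    ∃ a : Fin m → Fin 2,
      x ∈ (fun y => wordValue lam a + c * lam ^ (m + 1) + lam ^ (m + 1) * y) '' Ioo A B := by
  have hlam0 : 0 < lam := by linarith
  obtain ⟨a, y, ⟨hy1, hy2⟩, rfl⟩ :=
    exists_word_of_mem_Ioo hlam (P := lam * (A + c)) (Q := lam * (B + c))
      (by linarith [mul_sub lam B A]) m (by simpa only [pow_succ, mul_assoc] using hx)
  refine ⟨a, y / lam - c, ⟨?_, ?_⟩, ?_⟩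
  · rw [lt_sub_iff_add_lt, lt_div_iff₀ hlam0]; linarith
  · rw [sub_lt_iff_lt_add, div_lt_iff₀ hlam0]; linarith
  · simp only
    field_simp
    ring

theorem pow_mul_leftEnd_add_one {l : ℕ} (h : lam ^ l ≠ 1) :
    lam ^ l * (leftEnd lam l + 1) = leftEnd lam l := by
  have : 1 - lam ^ l ≠ 0 := sub_ne_zero.mpr h.symm
  unfold leftEnd
  field_simp
  ring

theorem pow_mul_rightEnd_add_geom_sum {m : ℕ} (h : lam ≠ 1) (h' : lam ^ (m + 1) ≠ 1) :
    lam ^ (m + 1) * rightEnd lam (m + 1) + lam * ∑ i ∈ range m, lam ^ i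
      = rightEnd lam (m + 1) := by
  have h1 : 1 - lam ≠ 0 := sub_ne_zero.mpr h.symm
  have h2 : 1 - lam ^ (m + 1) ≠ 0 := sub_ne_zero.mpr h'.symm
  rw [geom_sum_eq h]
  unfold rightEnd leftEnd
  field_simp
  ring

theorem one_lt_mul_rightEnd_sub_leftEnd (h0 : 0 < lam) (h1 : lam < 1) (m : ℕ)
    (hsum : 1 < ∑ j ∈ Icc 2 (m + 1), lam ^ j) :
    1 < lam * (rightEnd lam (m + 1) - leftEnd lam (m + 1)) := by
  set e := lam ^ (m + 1) with he
  have he0 : 0 < e := pow_pos h0 _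
  have he1 : e < 1 := pow_lt_one₀ h0.le h1 (by omega)
  have hkey : 1 - lam < lam ^ 2 - lam * e := by
    have hgeom : (∑ j ∈ Icc 2 (m + 1), lam ^ j) * (1 - lam) = lam ^ 2 - lam * e := by
      rw [← Finset.Ico_add_one_right_eq_Icc, geom_sum_Ico_mul_neg _ (by omega), he, pow_succ]
      ring
    nlinarith
  have hfrac : lam * (rightEnd lam (m + 1) - leftEnd lam (m + 1))
      = (lam ^ 2 * (1 - e) - 2 * lam * e * (1 - lam)) / ((1 - lam) * (1 - e)) := by
    have : 1 - lam ≠ 0 := by linarith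
    have : 1 - e ≠ 0 := by linarith
    unfold rightEnd leftEnd
    rw [← he]
    field_simp
    ring
  rw [hfrac, one_lt_div (mul_pos (by linarith) (by linarith))]
  nlinarith [mul_nonneg he0.le (sq_nonneg (1 - lam))]

end

theorem stmt15 (lam : ℝ) (hg : (Real.sqrt 5 - 1) / 2 < lam) (h1 : lam < 1)
    (l : ℕ) (hl : 3 ≤ l) (hsum : 1 < ∑ j ∈ Finset.Icc 2 l, lam ^ j) :
    ∀ x ∈ Set.Ioo (lam ^ l / (1 - lam ^ l)) (lam / (1 - lam) - lam ^ l / (1 - lam ^ l)),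
      (∃ a : Fin (l - 1) → Fin 2,
          x ∈ (fun y => (∑ j : Fin (l - 1), (a j : ℝ) * lam ^ ((j : ℕ) + 1)) + lam ^ l * y) ''
            Set.Ioo (lam ^ l / (1 - lam ^ l)) (lam / (1 - lam) - lam ^ l / (1 - lam ^ l))) ∧
      (∃ a : Fin (l - 1) → Fin 2,
          x ∈ (fun y =>
              (∑ j : Fin (l - 1), (a j : ℝ) * lam ^ ((j : ℕ) + 1)) + lam ^ l + lam ^ l * y) ''
            Set.Ioo (lam ^ l / (1 - lam ^ l)) (lam / (1 - lam) - lam ^ l / (1 - lam ^ l))) := by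
  intro x hx
  obtain ⟨m, rfl⟩ : ∃ m, l = m + 1 := ⟨l - 1, by omega⟩
  rw [Nat.add_sub_cancel]
  change leftEnd lam (m + 1) < x ∧ x < rightEnd lam (m + 1) at hx
  have hhalf : 1 / 2 < lam := by
    have : 2 < Real.sqrt 5 := by rw [Real.lt_sqrt] <;> norm_num
    linarith
  have h0 : 0 < lam := by linarith
  have he0 : 0 < lam ^ (m + 1) := pow_pos h0 _
  have he1 : lam ^ (m + 1) < 1 := pow_lt_one₀ h0.le h1 (by omega)
  have hgap := one_lt_mul_rightEnd_sub_leftEnd h0 h1 m hsum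
  have hA := pow_mul_leftEnd_add_one he1.ne
  have hB := pow_mul_rightEnd_add_geom_sum h1.ne he1.ne
  have hApos : 0 < leftEnd lam (m + 1) := div_pos he0 (by linarith)
  constructor
  · obtain ⟨a, ha⟩ := exists_word_mem_image_Ioo hhalf hgap m 0 (x := x)
      ⟨by nlinarith, by linarith⟩
    rw [zero_mul, add_zero] at ha
    exact ⟨a, ha⟩
  · obtain ⟨a, ha⟩ := exists_word_mem_image_Ioo hhalf hgap m 1 (x := x)
      ⟨by linarith, by linarith⟩
    rw [one_mul] at ha
    exact ⟨a, ha⟩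
end
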